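/- For every integer n ≥ 1, sup over r > 0 and over nonzero bivariate polynomials P ∈ ℂ[x,y] of total degree at most n of the ratio max_{0≤x≤2r} |P(x, e^x)| / max_{0≤x≤r} |P(x, e^x)| is at least 2^{(n+2 choose 2) − 1}. Consequently the exponent function φ(n) = n² is best possible (up to a constant factor) in order for the generalized Siciak extremal function Φ_{[0,r]}(·; V, φ) of a real segment, with V_n = {P(x,e^x) : deg P ≤ n}, to be bounded on the doubled segment [0,2r] uniformly in n. -/

import Mathlib

/-!
Since there are `N = (n + 2).choose 2` monomials `x^a y^b` with `a + b ≤ n`, some nonzero `P` of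
total degree at most `n` kills the first `N - 1` Taylor coefficients at `0` of `f x = P(x, eˣ)`;
these coefficients are linear in `P`, being those of the formal power series `P(X, exp X)`.
If `c xᵐ` is the leading term of `f`, then `m ≥ N - 1` and `|f x| = |c| xᵐ + O(xᵐ⁺¹)` on `[0, 1]`,
so for small `r` the maximum of `|f|` on `[0, 2r]` is nearly `2ᵐ` times the one on `[0, r]`.
(If all Taylor coefficients vanish, both maxima are `0`.)
-/

section

open Finset PowerSeries

lemma card_biUnion_range_antidiagonal (n : ℕ) :
    #((range (n + 1)).biUnion antidiagonal) = (n + 2).choose 2 := by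
  rw [card_biUnion fun i _ j _ hij => disjoint_left.2 fun p hi hj =>
    hij ((mem_antidiagonal.1 hi).symm.trans (mem_antidiagonal.1 hj))]
  simp only [Nat.card_antidiagonal]
  rw [Nat.choose_two_right, ← sum_range_id, sum_range_succ' _ (n + 1), add_zero]

lemma nat_card_setOf_sum_le_fin_two (n : ℕ) :
    Nat.card {s : Fin 2 →₀ ℕ | (s.sum fun _ e => e) ≤ n} = (n + 2).choose 2 := by
  rw [← card_biUnion_range_antidiagonal, ← Nat.card_eq_finsetCard]
  refine Nat.card_congr ((Finsupp.equivFunOnFinite.trans (finTwoArrowEquiv ℕ)).subtypeEquiv ?_)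
  intro s
  simp [Finsupp.sum_fintype]

theorem finrank_restrictTotalDegree_fin_two (K : Type*) [Field K] (n : ℕ) :
    Module.finrank K (MvPolynomial.restrictTotalDegree (Fin 2) K n) = (n + 2).choose 2 :=
  (Module.finrank_eq_nat_card_basis (MvPolynomial.basisRestrictSupport K _)).trans
    (nat_card_setOf_sum_le_fin_two n)

theorem exists_totalDegree_le_forall_coeff_aeval_eq_zero {K : Type*} [Field K] (n : ℕ)
    (v : Fin 2 → K⟦X⟧) :
    ∃ P : MvPolynomial (Fin 2) K, P ≠ 0 ∧ P.totalDegree ≤ n ∧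
      ∀ j < (n + 2).choose 2 - 1, coeff j (MvPolynomial.aeval v P) = 0 := by
  set V := MvPolynomial.restrictTotalDegree (Fin 2) K n
  let L : V →ₗ[K] Fin ((n + 2).choose 2 - 1) → K :=
    LinearMap.pi fun j => coeff j ∘ₗ (MvPolynomial.aeval v).toLinearMap ∘ₗ V.subtype
  have hpos : 0 < (n + 2).choose 2 := Nat.choose_pos (by omega)
  obtain ⟨⟨P, hPdeg⟩, hPker, hP0⟩ := Submodule.ne_bot_iff _ |>.1 <|
    L.ker_ne_bot_of_finrank_lt (by
      rw [Module.finrank_fin_fun, finrank_restrictTotalDegree_fin_two]; omega)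
  refine ⟨P, fun h => hP0 (Subtype.ext h), (MvPolynomial.mem_restrictTotalDegree _ _ _).1 hPdeg,
    fun j hj => ?_⟩
  exact congrFun (LinearMap.mem_ker.1 hPker) ⟨j, hj⟩

theorem hasSum_coeff_X_pow_mul {R : Type*} [CommRing R] [TopologicalSpace R]
    [IsTopologicalRing R] {f : R⟦X⟧} {x s : R} (hf : HasSum (fun j => coeff j f * x ^ j) s)
    (a : ℕ) : HasSum (fun j => coeff j (X ^ a * f) * x ^ j) (x ^ a * s) := by
  refine (hasSum_nat_add_iff' a).1 ?_
  simp only [coeff_X_pow_mul', Nat.le_add_left, if_true, Nat.add_sub_cancel, pow_add]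
  rw [sum_eq_zero fun i hi => by simp [(mem_range.1 hi).not_ge], sub_zero]
  exact (hf.mul_left (x ^ a)).congr_fun fun j => by ring

theorem hasSum_coeff_exp_pow (b : ℕ) (x : ℂ) :
    HasSum (fun j => coeff j (exp ℂ ^ b) * x ^ j) (Complex.exp x ^ b) := by
  rw [← Complex.exp_nat_mul, Complex.exp_eq_exp_ℂ]
  refine (NormedSpace.expSeries_div_hasSum_exp ((b : ℂ) * x)).congr_fun fun j => ?_
  rw [exp_pow_eq_rescale_exp, coeff_rescale, coeff_exp]
  simp only [div_eq_mul_inv, one_mul, map_inv₀, map_natCast, mul_pow]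
  ring

theorem hasSum_coeff_aeval_X_exp (P : MvPolynomial (Fin 2) ℂ) (x : ℂ) :
    HasSum (fun j => coeff j (MvPolynomial.aeval ![X, exp ℂ] P) * x ^ j)
      (MvPolynomial.eval ![x, Complex.exp x] P) := by
  induction P using MvPolynomial.induction_on' with
  | monomial s a =>
    simp only [MvPolynomial.aeval_monomial, MvPolynomial.eval_monomial, Finsupp.prod_fintype _ _
      (fun _ => pow_zero _), Fin.prod_univ_two, Matrix.cons_val_zero, Matrix.cons_val_one,
      Algebra.algebraMap_eq_smul_one, smul_mul_assoc, one_mul, coeff_smul, smul_eq_mul, mul_assoc]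
    exact (hasSum_coeff_X_pow_mul (hasSum_coeff_exp_pow _ x) _).mul_left a
  | add P Q hP hQ =>
    simpa only [map_add, add_mul] using hP.add hQ

end

section

open Set

theorem norm_sub_leading_term_le {𝕜 : Type*} [NormedField 𝕜] {a : ℕ → 𝕜} {m : ℕ}
    (ha : Summable fun j => ‖a j‖) (hm : ∀ j < m, a j = 0) {x s : 𝕜}
    (hs : HasSum (fun j => a j * x ^ j) s) (hx : ‖x‖ ≤ 1) :
    ‖s - a m * x ^ m‖ ≤ (∑' j, ‖a j‖) * ‖x‖ ^ (m + 1) := by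
  have h := hs.update m 0
  rw [zero_sub, neg_add_eq_sub] at h
  refine h.norm_le_of_bounded (ha.hasSum.mul_right _) fun j => ?_
  rcases lt_trichotomy j m with hj | rfl | hj
  · simp [Function.update_of_ne hj.ne, hm j hj]
  · simp only [Function.update_self, norm_zero]
    positivity
  · rw [Function.update_of_ne hj.ne', norm_mul, norm_pow]
    exact mul_le_mul_of_nonneg_left (pow_le_pow_of_le_one (norm_nonneg x) hx hj) (norm_nonneg _)

theorem exists_two_pow_sub_mul_sSup_le {g : ℝ → ℝ} {m : ℕ} {T A : ℝ} (hT : 0 < T)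
    (hg₀ : ∀ x ∈ Icc (0 : ℝ) 1, 0 ≤ g x)
    (hg : ∀ x ∈ Icc (0 : ℝ) 1, |g x - T * x ^ m| ≤ A * x ^ (m + 1)) {ε : ℝ} (hε : 0 < ε) :
    ∃ r > 0, (2 ^ m - ε) * sSup (g '' Icc 0 r) ≤ sSup (g '' Icc 0 (2 * r)) := by
  have hA : 0 ≤ A := by simpa using (abs_nonneg _).trans (hg 1 ⟨zero_le_one, le_rfl⟩)
  have hle : ∀ r ≤ 1, ∀ x ∈ Icc 0 r, g x ≤ T * r ^ m + A * r ^ (m + 1) := fun r hr x hx => by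
    have := (abs_le.1 (hg x ⟨hx.1, hx.2.trans hr⟩)).2
    have : T * x ^ m + A * x ^ (m + 1) ≤ T * r ^ m + A * r ^ (m + 1) := by
      gcongr <;> first | exact hx.1 | exact hx.2
    linarith
  have hsup_nonneg : ∀ r ≤ 1, 0 ≤ sSup (g '' Icc 0 r) := fun r hr =>
    Real.sSup_nonneg <| forall_mem_image.2 fun x hx => hg₀ x ⟨hx.1, hx.2.trans hr⟩
  set r := min (1 / 2) (ε * T / (3 * 2 ^ m * (A + 1)))
  have hr₀ : 0 < r := lt_min (by norm_num) (by positivity)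
  have hr₁ : 2 * r ≤ 1 := by linarith [min_le_left (1 / 2 : ℝ) (ε * T / (3 * 2 ^ m * (A + 1)))]
  have hrε : 3 * 2 ^ m * A * r ≤ ε * T := by
    have := (le_div_iff₀ (by positivity)).1
      (min_le_right (1 / 2 : ℝ) (ε * T / (3 * 2 ^ m * (A + 1))))
    nlinarith [mul_nonneg (mul_nonneg (by norm_num : (0 : ℝ) ≤ 3) (pow_nonneg zero_le_two m))
      hr₀.le]
  refine ⟨r, hr₀, ?_⟩
  rcases le_or_gt (2 ^ m - ε) 0 with hK | hK
  · exact (mul_nonpos_of_nonpos_of_nonneg hK (hsup_nonneg r (by linarith))).trans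
      (hsup_nonneg _ hr₁)
  have hlow : T * (2 * r) ^ m - A * (2 * r) ^ (m + 1) ≤ g (2 * r) := by
    linarith [(abs_le.1 (hg (2 * r) ⟨by positivity, hr₁⟩)).1]
  have hbdd : BddAbove (g '' Icc 0 (2 * r)) :=
    ⟨_, forall_mem_image.2 (hle (2 * r) hr₁)⟩
  have hcoef : (2 ^ m - ε) * (T + A * r) ≤ 2 ^ m * T - 2 ^ (m + 1) * A * r := by
    rw [pow_succ]
    nlinarith [mul_nonneg (mul_nonneg hε.le hA) hr₀.le]
  calc (2 ^ m - ε) * sSup (g '' Icc 0 r)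
      ≤ (2 ^ m - ε) * (T * r ^ m + A * r ^ (m + 1)) := by
        gcongr
        exact csSup_le ((nonempty_Icc.2 hr₀.le).image g) (forall_mem_image.2 (hle r (by linarith)))
    _ = r ^ m * ((2 ^ m - ε) * (T + A * r)) := by ring
    _ ≤ r ^ m * (2 ^ m * T - 2 ^ (m + 1) * A * r) := by gcongr
    _ = T * (2 * r) ^ m - A * (2 * r) ^ (m + 1) := by ring
    _ ≤ g (2 * r) := hlow
    _ ≤ sSup (g '' Icc 0 (2 * r)) := le_csSup hbdd ⟨2 * r, ⟨by positivity, le_rfl⟩, rfl⟩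

theorem exists_two_pow_sub_mul_sSup_norm_le {f : ℝ → ℂ} {a : ℕ → ℂ} {M : ℕ}
    (hf : ∀ x ∈ Icc (0 : ℝ) 1, HasSum (fun j => a j * (x : ℂ) ^ j) (f x))
    (ha : ∀ j < M, a j = 0) {ε : ℝ} (hε : 0 < ε) :
    ∃ r > 0, (2 ^ M - ε) * sSup ((‖f ·‖) '' Icc 0 r) ≤ sSup ((‖f ·‖) '' Icc 0 (2 * r)) := by
  classical
  by_cases h0 : ∀ j, a j = 0
  · have hf0 : ∀ x ∈ Icc (0 : ℝ) 1, ‖f x‖ = 0 := fun x hx => by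
      have hfx := hf x hx
      simp only [h0, zero_mul] at hfx
      rw [hfx.unique hasSum_zero, norm_zero]
    have hsup : ∀ r ∈ Ioc (0 : ℝ) 1, sSup ((‖f ·‖) '' Icc 0 r) = 0 := fun r hr => by
      rw [image_congr fun x hx => hf0 x ⟨hx.1, hx.2.trans hr.2⟩,
        (nonempty_Icc.2 hr.1.le).image_const, csSup_singleton]
    refine ⟨1 / 2, by norm_num, ?_⟩
    rw [hsup, hsup] <;> norm_num
  push Not at h0
  set m := Nat.find h0
  have hM : M ≤ m := not_lt.1 fun h => Nat.find_spec h0 (ha m h)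
  have ha₁ : Summable fun j => ‖a j‖ :=
    summable_norm_iff.2 (by simpa using (hf 1 ⟨zero_le_one, le_rfl⟩).summable)
  have hleading : ∀ x ∈ Icc (0 : ℝ) 1,
      |‖f x‖ - ‖a m‖ * x ^ m| ≤ (∑' j, ‖a j‖) * x ^ (m + 1) := fun x hx => by
    have hnorm : ‖(x : ℂ)‖ = x := by rw [Complex.norm_real, Real.norm_of_nonneg hx.1]
    calc |‖f x‖ - ‖a m‖ * x ^ m| = |‖f x‖ - ‖a m * (x : ℂ) ^ m‖| := by
          rw [norm_mul, norm_pow, hnorm]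
      _ ≤ ‖f x - a m * (x : ℂ) ^ m‖ := abs_norm_sub_norm_le _ _
      _ ≤ (∑' j, ‖a j‖) * x ^ (m + 1) := by
          simpa only [hnorm] using norm_sub_leading_term_le ha₁
            (fun j hj => not_not.1 (Nat.find_min h0 hj)) (hf x hx) (hnorm.trans_le hx.2)
  obtain ⟨r, hr, h⟩ := exists_two_pow_sub_mul_sSup_le (norm_pos_iff.2 (Nat.find_spec h0))
    (fun x _ => norm_nonneg (f x)) hleading hε
  refine ⟨r, hr, le_trans ?_ h⟩
  exact mul_le_mul_of_nonneg_right (by gcongr; norm_num)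
    (Real.sSup_nonneg (forall_mem_image.2 fun x _ => norm_nonneg (f x)))

end

theorem doubling_sup_ge_two_pow_general (n : ℕ) :
    ∀ ε > (0 : ℝ), ∃ r > (0 : ℝ), ∃ P : MvPolynomial (Fin 2) ℂ,
      P ≠ 0 ∧ P.totalDegree ≤ n ∧
      ((2 : ℝ) ^ ((n + 2).choose 2 - 1) - ε) *
          sSup ((fun x : ℝ => ‖MvPolynomial.eval ![(x : ℂ), Complex.exp x] P‖) ''
            Set.Icc 0 r) ≤
        sSup ((fun x : ℝ => ‖MvPolynomial.eval ![(x : ℂ), Complex.exp x] P‖) ''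
          Set.Icc 0 (2 * r)) := by
  intro ε hε
  obtain ⟨P, hP, hdeg, hcoeff⟩ :=
    exists_totalDegree_le_forall_coeff_aeval_eq_zero n ![PowerSeries.X, PowerSeries.exp ℂ]
  obtain ⟨r, hr, h⟩ := exists_two_pow_sub_mul_sSup_norm_le
    (fun x _ => hasSum_coeff_aeval_X_exp P x) hcoeff hε
  exact ⟨r, hr, P, hP, hdeg, h⟩

/-- For every `n ≥ 1`, the supremum over `r > 0` and nonzero bivariate
polynomials `P` of total degree at most `n` of the doubling ratio
`max_{0≤x≤2r} |P(x, eˣ)| / max_{0≤x≤r} |P(x, eˣ)|` is at least `2^{(n+2 choose 2) - 1}`: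
for every `ε > 0` there are `r > 0` and `P ≠ 0` with `deg P ≤ n` such that
`max_{0≤x≤2r} |P(x, eˣ)| ≥ (2^{(n+2 choose 2)-1} - ε) · max_{0≤x≤r} |P(x, eˣ)|`.
(Hence `φ(n) = n²` is the best possible exponent function.) -/
theorem doubling_sup_ge_two_pow (n : ℕ) (hn : 1 ≤ n) :
    ∀ ε > (0 : ℝ), ∃ r > (0 : ℝ), ∃ P : MvPolynomial (Fin 2) ℂ,
      P ≠ 0 ∧ P.totalDegree ≤ n ∧
      ((2 : ℝ) ^ ((n + 2).choose 2 - 1) - ε) *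
          sSup ((fun x : ℝ => ‖MvPolynomial.eval ![(x : ℂ), Complex.exp x] P‖) ''
            Set.Icc 0 r) ≤
        sSup ((fun x : ℝ => ‖MvPolynomial.eval ![(x : ℂ), Complex.exp x] P‖) ''
          Set.Icc 0 (2 * r)) :=
  doubling_sup_ge_two_pow_general n
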